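/- arXiv:2309.11174 — 6 statements merged into one kernel-verified Lean document; each statement's English description precedes it below -/
import Mathlib

section
/- If a two-user multiple access channel W : X × Y → Z (a conditional probability kernel W(z|x,y) on finite alphabets) is 2-overwritable, i.e., there exists a conditional distribution P(x'|x,y) such that for all x ∈ X, y, y' ∈ Y, z ∈ Z, ∑_{x'} P(x'|x,y) W(z|x',y') = W(z|x,y), then W is 2-spoofable: there exist conditional distributions Q₁(x | x̃, ỹ) and Q₂(y | ỹ, y') such that for all x̃ ∈ X, ỹ, y' ∈ Y, z ∈ Z, ∑_x Q₁(x|x̃,ỹ) W(z|x,y') = ∑_x Q₁(x|x̃,y') W(z|x,ỹ) = ∑_y Q₂(y|ỹ,y') W(z|x̃,y). -/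
open Finset

theorem overwritable_implies_spoofable_general
    {X Y Z : Type} [Fintype X] [Fintype Y]
    [Nonempty Y]
    (W : X → Y → Z → ℝ)
    (hover : ∃ P : X → Y → X → ℝ,
      (∀ x y x', 0 ≤ P x y x') ∧ (∀ x y, ∑ x', P x y x' = 1) ∧
      (∀ x y y' z, ∑ x', P x y x' * W x' y' z = W x y z)) :
    ∃ (Q₁ : X → Y → X → ℝ) (Q₂ : Y → Y → Y → ℝ),
      (∀ xt yt x, 0 ≤ Q₁ xt yt x) ∧ (∀ xt yt, ∑ x, Q₁ xt yt x = 1) ∧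
      (∀ yt y' y, 0 ≤ Q₂ yt y' y) ∧ (∀ yt y', ∑ y, Q₂ yt y' y = 1) ∧
      (∀ xt yt y' z,
        (∑ x, Q₁ xt yt x * W x y' z) = (∑ x, Q₁ xt y' x * W x yt z) ∧
        (∑ x, Q₁ xt y' x * W x yt z) = (∑ y, Q₂ yt y' y * W xt y z)) := by
  classical
  obtain ⟨P, hPnn, hPsum, hP⟩ := hover
  obtain ⟨y₀⟩ := ‹Nonempty Y›
  -- Take Q_Y to be the point mass at y₀: then Q₁ ignores ỹ and overwrites every input by
  -- (x̃, y₀), while Q₂ always sends y₀, so all three output distributions equal W(·|x̃,y₀).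
  refine ⟨fun xt _ => P xt y₀, fun _ _ y => if y = y₀ then 1 else 0,
    fun _ _ _ => hPnn _ _ _, fun _ _ => hPsum _ _, fun _ _ _ => ?_, fun _ _ => ?_,
    fun _ _ _ _ => ?_⟩
  · positivity
  · simp
  · simp [hP]

/-- every 2-overwritable MAC is 2-spoofable. -/
theorem overwritable_implies_spoofable
    {X Y Z : Type} [Fintype X] [Fintype Y] [Fintype Z]
    [Nonempty X] [Nonempty Y] [Nonempty Z]
    (W : X → Y → Z → ℝ)
    (hWnn : ∀ x y z, 0 ≤ W x y z)
    (hWsum : ∀ x y, ∑ z, W x y z = 1)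
    (hover : ∃ P : X → Y → X → ℝ,
      (∀ x y x', 0 ≤ P x y x') ∧ (∀ x y, ∑ x', P x y x' = 1) ∧
      (∀ x y y' z, ∑ x', P x y x' * W x' y' z = W x y z)) :
    ∃ (Q₁ : X → Y → X → ℝ) (Q₂ : Y → Y → Y → ℝ),
      (∀ xt yt x, 0 ≤ Q₁ xt yt x) ∧ (∀ xt yt, ∑ x, Q₁ xt yt x = 1) ∧
      (∀ yt y' y, 0 ≤ Q₂ yt y' y) ∧ (∀ yt y', ∑ y, Q₂ yt y' y = 1) ∧
      (∀ xt yt y' z,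
        (∑ x, Q₁ xt yt x * W x y' z) = (∑ x, Q₁ xt y' x * W x yt z) ∧
        (∑ x, Q₁ xt y' x * W x yt z) = (∑ y, Q₂ yt y' y * W xt y z)) :=
  overwritable_implies_spoofable_general W hover
end

section
/- If a two-user multiple access channel W on finite alphabets X, Y, Z is 2-spoofable (there exist kernels Q₁(x|x̃,ỹ), Q₂(y|ỹ,y') with ∑_x Q₁(x|x̃,ỹ)W(z|x,y') = ∑_x Q₁(x|x̃,y')W(z|x,ỹ) = ∑_y Q₂(y|ỹ,y')W(z|x̃,y) for all x̃,ỹ,y',z), then W is 2-symmetrizable, i.e., there exists a stochastic kernel R : Y → X with ∑_x R(x|y') W(z|x,y) = ∑_x R(x|y) W(z|x,y') for all y, y' ∈ Y and z ∈ Z. -/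
open Finset

/-- every 2-spoofable MAC is 2-symmetrizable. -/
theorem spoofable_implies_symmetrizable
    {X Y Z : Type} [Fintype X] [Fintype Y] [Fintype Z]
    [Nonempty X] [Nonempty Y] [Nonempty Z]
    (W : X → Y → Z → ℝ)
    (hWnn : ∀ x y z, 0 ≤ W x y z)
    (hWsum : ∀ x y, ∑ z, W x y z = 1)
    (hspoof : ∃ (Q₁ : X → Y → X → ℝ) (Q₂ : Y → Y → Y → ℝ),
      (∀ xt yt x, 0 ≤ Q₁ xt yt x) ∧ (∀ xt yt, ∑ x, Q₁ xt yt x = 1) ∧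
      (∀ yt y' y, 0 ≤ Q₂ yt y' y) ∧ (∀ yt y', ∑ y, Q₂ yt y' y = 1) ∧
      (∀ xt yt y' z,
        (∑ x, Q₁ xt yt x * W x y' z) = (∑ x, Q₁ xt y' x * W x yt z) ∧
        (∑ x, Q₁ xt y' x * W x yt z) = (∑ y, Q₂ yt y' y * W xt y z))) :
    ∃ R : Y → X → ℝ,
      (∀ y x, 0 ≤ R y x) ∧ (∀ y, ∑ x, R y x = 1) ∧
      (∀ y y' z, ∑ x, R y' x * W x y z = ∑ x, R y x * W x y' z) := by
  obtain ⟨Q₁, Q₂, h1nn, h1sum, _, _, heq⟩ := hspoof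
  obtain ⟨x₀⟩ := ‹Nonempty X›
  refine ⟨fun y x => Q₁ x₀ y x, fun y x => h1nn x₀ y x, fun y => h1sum x₀ y, ?_⟩
  intro y y' z
  exact ((heq x₀ y y' z).1).symm
end

section
/- The binary erasure MAC Z = X + Y (X = Y = {0,1}, Z = {0,1,2}, integer addition) is not 1-spoofable: there do not exist stochastic kernels Q₁(y | x̃, ỹ) and Q₂(x | x̃, x') such that for all x', x̃ ∈ {0,1}, ỹ ∈ {0,1}, z ∈ {0,1,2}, ∑_y Q₁(y|x̃,ỹ) W(z|x',y) = ∑_y Q₁(y|x',ỹ) W(z|x̃,y) = ∑_x Q₂(x|x̃,x') W(z|x,ỹ). -/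
/-!
The output `z = 2` forces both senders to send `1`, and `z = 0` forces both to send `0`.
Comparing the two sides of the spoofing identities at `(x', x̃, ỹ, z) = (1, 0, 1, 2)` and
`(1, 0, 0, 0)` shows that `Q₂(· | 0, 1)` gives probability `0` to both inputs, so it is not a
probability distribution.
-/

open Finset

/-- The binary erasure MAC `Z = X + Y`. -/
def bemac (x y : Fin 2) (z : Fin 3) : ℝ :=
  if (z : ℕ) = (x : ℕ) + (y : ℕ) then 1 else 0

theorem bemac_comm (x y : Fin 2) (z : Fin 3) : bemac x y z = bemac y x z := by
  simp only [bemac, add_comm]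

theorem sum_mul_bemac_comm (q : Fin 2 → ℝ) (y : Fin 2) (z : Fin 3) :
    ∑ x, q x * bemac x y z = ∑ x, q x * bemac y x z := by
  simp only [bemac_comm _ y]

theorem sum_mul_bemac_eq_zero {x : Fin 2} {z : Fin 3} (h : ∀ y : Fin 2, (z : ℕ) ≠ x + y)
    (q : Fin 2 → ℝ) : ∑ y, q y * bemac x y z = 0 :=
  sum_eq_zero fun y _ => by simp [bemac, h y]

theorem sum_mul_bemac_eq_of_val_eq {x y : Fin 2} {z : Fin 3} (h : (z : ℕ) = x + y)
    (q : Fin 2 → ℝ) : ∑ y', q y' * bemac x y' z = q y := by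
  rw [sum_eq_single y]
  · simp [bemac, h]
  · intro y' _ hy'
    have : (z : ℕ) ≠ x + y' := by rw [h]; exact fun e => hy' (Fin.ext (by omega))
    simp [bemac, this]
  · simp

/-- the binary erasure MAC is not 1-spoofable. -/
theorem bemac_not_one_spoofable :
    ¬ ∃ (Q₁ : Fin 2 → Fin 2 → Fin 2 → ℝ) (Q₂ : Fin 2 → Fin 2 → Fin 2 → ℝ),
      (∀ xt yt y, 0 ≤ Q₁ xt yt y) ∧ (∀ xt yt, ∑ y, Q₁ xt yt y = 1) ∧
      (∀ xt x' x, 0 ≤ Q₂ xt x' x) ∧ (∀ xt x', ∑ x, Q₂ xt x' x = 1) ∧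
      (∀ (x' xt yt : Fin 2) (z : Fin 3),
        (∑ y, Q₁ xt yt y * bemac x' y z) = (∑ y, Q₁ x' yt y * bemac xt y z) ∧
        (∑ y, Q₁ x' yt y * bemac xt y z) = (∑ x, Q₂ xt x' x * bemac x yt z)) := by
  rintro ⟨Q₁, Q₂, -, -, -, hQ₂, hspoof⟩
  have hQ₂_one : Q₂ 0 1 1 = 0 := by
    have h := (hspoof 1 0 1 2).2
    rwa [sum_mul_bemac_eq_zero (by decide), sum_mul_bemac_comm,
      sum_mul_bemac_eq_of_val_eq (y := 1) (by decide), eq_comm] at h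
  have hQ₂_zero : Q₂ 0 1 0 = 0 := by
    obtain ⟨h₁, h₂⟩ := hspoof 1 0 0 0
    rwa [← h₁, sum_mul_bemac_eq_zero (by decide), sum_mul_bemac_comm,
      sum_mul_bemac_eq_of_val_eq (y := 0) (by decide), eq_comm] at h₂
  simpa [Fin.sum_univ_two, hQ₂_zero, hQ₂_one] using hQ₂ 0 1
end

section
/- Let Z₁, …, Z_N be random variables and let f_i(Z₁,…,Z_i) ∈ [0,1] be measurable functions. If E[f_i(Z₁,…,Z_i) | Z₁,…,Z_{i-1}] ≤ a almost surely for every i = 1,…,N, then for every t, P( (1/N) ∑_{i=1}^N f_i(Z₁,…,Z_i) > t ) ≤ 2^{-N (t - a log₂ e)}. -/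
open Finset Classical

/-!
Since `2 ^ x ≤ 1 + x` on `[0, 1]`, the Chernoff weight `2 ^ (∑ᵢ fᵢ)` is dominated by
`∏ᵢ (1 + fᵢ)`. Conditioning on `Z₁, …, Z_{i-1}` peels the factors off one at a time, each
contributing at most `1 + a ≤ e ^ a`, so `E ∏ᵢ (1 + fᵢ) ≤ e ^ (N a)`; Markov's inequality for
`2 ^ (∑ᵢ fᵢ - N t)` finishes the proof.
-/

lemma two_rpow_le_one_add {x : ℝ} (h0 : 0 ≤ x) (h1 : x ≤ 1) : (2 : ℝ) ^ x ≤ 1 + x := by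
  simpa [one_add_one_eq_two] using rpow_one_add_le_one_add_mul_self (s := 1) (by norm_num) h0 h1

lemma two_rpow_sum_le_prod_one_add {ι : Type*} (s : Finset ι) {x : ι → ℝ}
    (h0 : ∀ i ∈ s, 0 ≤ x i) (h1 : ∀ i ∈ s, x i ≤ 1) :
    (2 : ℝ) ^ (∑ i ∈ s, x i) ≤ ∏ i ∈ s, (1 + x i) := by
  rw [Real.rpow_sum_of_pos two_pos]
  exact prod_le_prod (fun i _ => by positivity) fun i hi => two_rpow_le_one_add (h0 i hi) (h1 i hi)

lemma two_rpow_neg_mul_sub_mul_logb_exp_one (n t a : ℝ) :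
    (2 : ℝ) ^ (-n * (t - a * Real.logb 2 (Real.exp 1))) = Real.exp (n * a) / 2 ^ (n * t) := by
  have hlog : Real.log 2 ≠ 0 := by positivity
  rw [Real.rpow_def_of_pos two_pos, Real.rpow_def_of_pos two_pos, ← Real.exp_sub]
  congr 1
  simp only [Real.logb, Real.log_exp]
  field_simp
  ring

lemma sum_le_sum_mul_of_one_le {ι : Type*} [Fintype ι] (s : Finset ι) {p Y : ι → ℝ}
    (hp : ∀ ω, 0 ≤ p ω) (hY0 : ∀ ω, 0 ≤ Y ω) (hY1 : ∀ ω ∈ s, 1 ≤ Y ω) :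
    ∑ ω ∈ s, p ω ≤ ∑ ω, p ω * Y ω :=
  calc ∑ ω ∈ s, p ω ≤ ∑ ω ∈ s, p ω * Y ω :=
        sum_le_sum fun ω hω => le_mul_of_one_le_right (hp ω) (hY1 ω hω)
    _ ≤ ∑ ω, p ω * Y ω :=
        sum_le_sum_of_subset_of_nonneg (subset_univ s) fun ω _ _ => mul_nonneg (hp ω) (hY0 ω)

/-- The finite form of `E[g F] ≤ a E[g]` for `g ≥ 0` measurable with respect to `φ`,
given `E[F | φ] ≤ a`. -/
lemma sum_mul_mul_le_of_fiberwise {Ω β : Type*} [Fintype Ω] (φ : Ω → β) {p g F : Ω → ℝ} {a : ℝ}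
    (hg : ∀ ω, 0 ≤ g ω) (hgφ : ∀ ω ω', φ ω = φ ω' → g ω = g ω')
    (hF : ∀ ω, ∑ ω' ∈ univ.filter (fun ω' => φ ω' = φ ω), p ω' * F ω'
      ≤ a * ∑ ω' ∈ univ.filter (fun ω' => φ ω' = φ ω), p ω') :
    ∑ ω, p ω * g ω * F ω ≤ a * ∑ ω, p ω * g ω := by
  have hmaps : ∀ ω ∈ (univ : Finset Ω), φ ω ∈ univ.image φ :=
    fun ω _ => mem_image_of_mem φ (mem_univ ω)
  rw [← sum_fiberwise_of_maps_to hmaps, ← sum_fiberwise_of_maps_to hmaps, mul_sum]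
  refine sum_le_sum fun b hb => ?_
  obtain ⟨ω₀, -, rfl⟩ := mem_image.mp hb
  have hconst : ∀ ω ∈ univ.filter (fun ω => φ ω = φ ω₀), g ω = g ω₀ :=
    fun ω hω => hgφ ω ω₀ (mem_filter.mp hω).2
  calc ∑ ω ∈ univ.filter (fun ω => φ ω = φ ω₀), p ω * g ω * F ω
        = g ω₀ * ∑ ω ∈ univ.filter (fun ω => φ ω = φ ω₀), p ω * F ω := by
          rw [mul_sum]; exact sum_congr rfl fun ω hω => by rw [hconst ω hω]; ring
    _ ≤ g ω₀ * (a * ∑ ω ∈ univ.filter (fun ω => φ ω = φ ω₀), p ω) :=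
          mul_le_mul_of_nonneg_left (hF ω₀) (hg ω₀)
    _ = a * ∑ ω ∈ univ.filter (fun ω => φ ω = φ ω₀), p ω * g ω := by
          rw [mul_sum, mul_sum, mul_sum]; exact sum_congr rfl fun ω hω => by rw [hconst ω hω]; ring

section Conditioning

variable {Ω α : Type*} [Fintype Ω] {N : ℕ} {p : Ω → ℝ} {Z : Fin N → Ω → α}
  {f : Fin N → Ω → ℝ} {a : ℝ}

lemma sum_mul_one_add_mul_le_exp_mul (hp : ∀ ω, 0 ≤ p ω) {i : Fin N} {F : Ω → ℝ}
    (hcond : ∀ ω : Ω,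
      ∑ ω' ∈ univ.filter (fun ω' => ∀ j : Fin N, j < i → Z j ω' = Z j ω), p ω' * F ω'
        ≤ a * ∑ ω' ∈ univ.filter (fun ω' => ∀ j : Fin N, j < i → Z j ω' = Z j ω), p ω')
    {g : Ω → ℝ} (hg : ∀ ω, 0 ≤ g ω)
    (hg_past : ∀ ω ω', (∀ j : Fin N, j < i → Z j ω = Z j ω') → g ω = g ω') :
    ∑ ω, p ω * ((1 + F ω) * g ω) ≤ Real.exp a * ∑ ω, p ω * g ω := by
  let past : Ω → {j : Fin N // j < i} → α := fun ω j => Z j ω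
  have hstep : ∑ ω, p ω * g ω * F ω ≤ a * ∑ ω, p ω * g ω :=
    sum_mul_mul_le_of_fiberwise past hg
      (fun ω ω' h => hg_past ω ω' fun j hj => congrFun h ⟨j, hj⟩)
      (fun ω => by convert hcond ω using 3 <;> simp [past, funext_iff])
  have hmass : 0 ≤ ∑ ω, p ω * g ω := sum_nonneg fun ω _ => mul_nonneg (hp ω) (hg ω)
  calc ∑ ω, p ω * ((1 + F ω) * g ω) = ∑ ω, p ω * g ω + ∑ ω, p ω * g ω * F ω := by
        rw [← sum_add_distrib]; exact sum_congr rfl fun ω _ => by ring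
    _ ≤ (a + 1) * ∑ ω, p ω * g ω := by linarith
    _ ≤ Real.exp a * ∑ ω, p ω * g ω :=
        mul_le_mul_of_nonneg_right (Real.add_one_le_exp a) hmass

lemma sum_mul_prod_one_add_le_exp_pow (hp : ∀ ω, 0 ≤ p ω) (hp1 : ∑ ω, p ω = 1)
    (hf0 : ∀ i ω, 0 ≤ f i ω)
    (hmeas : ∀ (i : Fin N) (ω ω' : Ω), (∀ j : Fin N, j ≤ i → Z j ω = Z j ω') → f i ω = f i ω')
    (hcond : ∀ (i : Fin N) (ω : Ω),
      ∑ ω' ∈ univ.filter (fun ω' => ∀ j : Fin N, j < i → Z j ω' = Z j ω), p ω' * f i ω'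
        ≤ a * ∑ ω' ∈ univ.filter (fun ω' => ∀ j : Fin N, j < i → Z j ω' = Z j ω), p ω') :
    ∑ ω, p ω * ∏ i, (1 + f i ω) ≤ Real.exp a ^ N := by
  suffices h : ∀ k ≤ N, ∑ ω, p ω * ∏ j ∈ univ.filter (fun j : Fin N => (j : ℕ) < k), (1 + f j ω)
      ≤ Real.exp a ^ k by
    simpa using h N le_rfl
  intro k
  induction k with
  | zero => simp [hp1]
  | succ k ih =>
    intro hk
    let i : Fin N := ⟨k, hk⟩
    have hinsert : univ.filter (fun j : Fin N => (j : ℕ) < k + 1)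
        = insert i (univ.filter (fun j : Fin N => (j : ℕ) < k)) := by
      ext j; simp only [mem_filter, mem_univ, true_and, mem_insert, Fin.ext_iff, i]; omega
    have hi : i ∉ univ.filter (fun j : Fin N => (j : ℕ) < k) := by simp [i]
    have hpast : ∀ ω ω', (∀ j : Fin N, j < i → Z j ω = Z j ω') →
        ∏ j ∈ univ.filter (fun j : Fin N => (j : ℕ) < k), (1 + f j ω)
          = ∏ j ∈ univ.filter (fun j : Fin N => (j : ℕ) < k), (1 + f j ω') :=
      fun ω ω' h => prod_congr rfl fun j hj => by
        rw [hmeas j ω ω' fun l hl => h l (lt_of_le_of_lt hl (mem_filter.mp hj).2)]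
    simp only [hinsert, prod_insert hi]
    calc _ ≤ Real.exp a *
            ∑ ω, p ω * ∏ j ∈ univ.filter (fun j : Fin N => (j : ℕ) < k), (1 + f j ω) :=
          sum_mul_one_add_mul_le_exp_mul hp (hcond i)
            (fun ω => prod_nonneg fun j _ => by linarith [hf0 j ω]) hpast
      _ ≤ Real.exp a * Real.exp a ^ k :=
          mul_le_mul_of_nonneg_left (ih (Nat.le_of_succ_le hk)) (Real.exp_pos a).le
      _ = Real.exp a ^ (k + 1) := (pow_succ' _ _).symm

end Conditioning

theorem csiszar_narayan_A1_general
    {Ω α : Type} [Fintype Ω]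
    (p : Ω → ℝ) (hp : ∀ ω, 0 ≤ p ω) (hp1 : ∑ ω, p ω = 1)
    (N : ℕ) (Z : Fin N → Ω → α) (f : Fin N → Ω → ℝ)
    (hf0 : ∀ i ω, 0 ≤ f i ω) (hf1 : ∀ i ω, f i ω ≤ 1)
    (hmeas : ∀ (i : Fin N) (ω ω' : Ω),
      (∀ j : Fin N, j ≤ i → Z j ω = Z j ω') → f i ω = f i ω')
    (a : ℝ)
    (hcond : ∀ (i : Fin N) (ω : Ω),
      (∑ ω' ∈ Finset.univ.filter (fun ω' => ∀ j : Fin N, j < i → Z j ω' = Z j ω),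
          p ω' * f i ω')
        ≤ a * ∑ ω' ∈ Finset.univ.filter (fun ω' => ∀ j : Fin N, j < i → Z j ω' = Z j ω),
            p ω')
    (t : ℝ) :
    ∑ ω ∈ Finset.univ.filter (fun ω => t < (1 / (N : ℝ)) * ∑ i, f i ω), p ω
      ≤ (2 : ℝ) ^ (-(N : ℝ) * (t - a * Real.logb 2 (Real.exp 1))) := by
  have hevent : ∀ ω ∈ univ.filter (fun ω => t < (1 / (N : ℝ)) * ∑ i, f i ω),
      1 ≤ (2 : ℝ) ^ (∑ i, f i ω - N * t) := by
    intro ω hω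
    refine Real.one_le_rpow one_le_two (sub_nonneg.mpr ?_)
    rcases N.eq_zero_or_pos with rfl | hN
    · simp
    · have := (mem_filter.mp hω).2
      rw [one_div_mul_eq_div, lt_div_iff₀ (by exact_mod_cast hN)] at this
      linarith
  have hchernoff : ∑ ω, p ω * (2 : ℝ) ^ (∑ i, f i ω) ≤ Real.exp a ^ N :=
    calc _ ≤ ∑ ω, p ω * ∏ i, (1 + f i ω) :=
          sum_le_sum fun ω _ => mul_le_mul_of_nonneg_left
            (two_rpow_sum_le_prod_one_add _ (fun i _ => hf0 i ω) fun i _ => hf1 i ω) (hp ω)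
      _ ≤ Real.exp a ^ N := sum_mul_prod_one_add_le_exp_pow hp hp1 hf0 hmeas hcond
  calc _ ≤ ∑ ω, p ω * (2 : ℝ) ^ (∑ i, f i ω - N * t) :=
        sum_le_sum_mul_of_one_le _ hp (fun ω => by positivity) hevent
    _ = (∑ ω, p ω * (2 : ℝ) ^ (∑ i, f i ω)) / 2 ^ ((N : ℝ) * t) := by
        simp only [Real.rpow_sub two_pos, sum_div, mul_div_assoc]
    _ ≤ Real.exp a ^ N / 2 ^ ((N : ℝ) * t) := by gcongr
    _ = _ := by rw [two_rpow_neg_mul_sub_mul_logb_exp_one, Real.exp_nat_mul]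

/-- STATEMENT 10 (Csiszár–Narayan Lemma A1), on a finite probability space:
if `E[fᵢ(Z₁,…,Zᵢ) | Z₁,…,Z_{i-1}] ≤ a` almost surely for every `i`, then
`P((1/N) ∑ᵢ fᵢ > t) ≤ 2^{-N(t - a log₂ e)}`. -/
theorem csiszar_narayan_A1
    {Ω α : Type} [Fintype Ω] [Fintype α]
    (p : Ω → ℝ) (hp : ∀ ω, 0 ≤ p ω) (hp1 : ∑ ω, p ω = 1)
    (N : ℕ) (Z : Fin N → Ω → α) (f : Fin N → Ω → ℝ)
    (hf0 : ∀ i ω, 0 ≤ f i ω) (hf1 : ∀ i ω, f i ω ≤ 1)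
    (hmeas : ∀ (i : Fin N) (ω ω' : Ω),
      (∀ j : Fin N, j ≤ i → Z j ω = Z j ω') → f i ω = f i ω')
    (a : ℝ)
    (hcond : ∀ (i : Fin N) (ω : Ω),
      (∑ ω' ∈ Finset.univ.filter (fun ω' => ∀ j : Fin N, j < i → Z j ω' = Z j ω),
          p ω' * f i ω')
        ≤ a * ∑ ω' ∈ Finset.univ.filter (fun ω' => ∀ j : Fin N, j < i → Z j ω' = Z j ω),
            p ω')
    (t : ℝ) :
    ∑ ω ∈ Finset.univ.filter (fun ω => t < (1 / (N : ℝ)) * ∑ i, f i ω), p ω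
      ≤ (2 : ℝ) ^ (-(N : ℝ) * (t - a * Real.logb 2 (Real.exp 1))) :=
  csiszar_narayan_A1_general p hp hp1 N Z f hf0 hf1 hmeas a hcond t
end

section
/- Let P_{X Y X̃ Ỹ Z} be a joint distribution on finite alphabets and W a stochastic kernel from X × Y to Z. If D(P_{XYZ} ‖ P_X P_Y W) + I(X̃Ỹ ; XZ | Y) < 2η, then D(P_{X X̃ Ỹ Z} ‖ P_X P_{X̃Ỹ} V) < 2η, where V(z|x,x̃,ỹ) := ∑_y P_{Y|X̃Ỹ}(y|x̃,ỹ) W(z|x,y). Consequently, by Pinsker's inequality, the total variation distance between P_{X X̃ Ỹ Z} and P_X P_{X̃Ỹ} V is less than √(2 ln 2 · 2η) ≤ 2√(ln 2 · η). -/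
/-!
Adding `I(X̃Ỹ; XZ | Y)` to `D(P_{XYZ} ‖ P_X P_Y W)` merges the two into the single divergence
`D(P ‖ P_X P_{YX̃Ỹ} W)` of the full joint law: the factors `P_Y` and `P_{XYZ}` cancel inside the
logarithm. Summing `y` out of both arguments can only decrease a divergence (log-sum inequality),
and the `y`-marginal of `P_X P_{YX̃Ỹ} W` is `P_X P_{X̃Ỹ} V`. For total variation, the pointwise
bound `(p - q)² / (2 (p + q)) ≤ p log (p / q) - p + q` summed with Cauchy–Schwarz gives
`d_TV² ≤ D` in nats.
-/

open Finset Real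

theorem sum_mul_log_sum_div_sum_le {ι : Type*} (s : Finset ι) {a b : ι → ℝ}
    (ha : ∀ i ∈ s, 0 < a i) (hb : ∀ i ∈ s, 0 < b i) :
    (∑ i ∈ s, a i) * log ((∑ i ∈ s, a i) / ∑ i ∈ s, b i) ≤
      ∑ i ∈ s, a i * log (a i / b i) := by
  rcases s.eq_empty_or_nonempty with rfl | hs
  · simp
  set r := (∑ i ∈ s, a i) / ∑ i ∈ s, b i
  have hr : 0 < r := div_pos (sum_pos ha hs) (sum_pos hb hs)
  have key : ∀ i ∈ s, a i - b i * r ≤ a i * log (a i / b i) - a i * log r := by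
    intro i hi
    have hai := ha i hi
    have hbi := hb i hi
    have h := log_le_sub_one_of_pos (show 0 < b i * r / a i by positivity)
    rw [log_div (by positivity) hai.ne', log_mul hbi.ne' hr.ne'] at h
    rw [log_div hai.ne' hbi.ne']
    have e : a i * (b i * r / a i - 1) = b i * r - a i := by field_simp
    linarith [mul_le_mul_of_nonneg_left h hai.le]
  have htot : ∑ i ∈ s, (a i - b i * r) = 0 := by
    rw [sum_sub_distrib, ← sum_mul, mul_div_cancel₀ _ (sum_pos hb hs).ne', sub_self]
  have hsum := sum_le_sum key
  rw [htot, sum_sub_distrib, ← sum_mul] at hsum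
  linarith

theorem sq_sub_div_le_mul_log_div_sub_add {p q : ℝ} (hp : 0 < p) (hq : 0 < q) :
    (p - q) ^ 2 / (2 * (p + q)) ≤ p * log (p / q) - p + q := by
  set m : ℝ := (p + q) / 2
  -- split `log (p / q)` at the midpoint `m` and bound each half by `log t ≥ 1 - t⁻¹`
  have hm : 0 < m := by positivity
  have h1 := one_sub_inv_le_log_of_pos (div_pos hp hm)
  have h2 := one_sub_inv_le_log_of_pos (div_pos hm hq)
  have hsplit : log (p / q) = log (p / m) + log (m / q) := by
    rw [← log_mul (by positivity) (by positivity), div_mul_div_cancel₀ hm.ne']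
  have e : p * (1 - (p / m)⁻¹) + p * (1 - (m / q)⁻¹) - p + q = (p - q) ^ 2 / (2 * (p + q)) := by
    simp only [m]; field_simp; ring
  rw [hsplit, ← e]
  linarith [mul_le_mul_of_nonneg_left h1 hp.le, mul_le_mul_of_nonneg_left h2 hp.le]

theorem sq_sum_abs_sub_le_mul_sum_mul_log_div {ι : Type*} (s : Finset ι) {a b : ι → ℝ}
    (ha : ∀ i ∈ s, 0 < a i) (hb : ∀ i ∈ s, 0 < b i) (hab : ∑ i ∈ s, a i = ∑ i ∈ s, b i) :
    (∑ i ∈ s, |a i - b i|) ^ 2 ≤ 4 * (∑ i ∈ s, a i) * ∑ i ∈ s, a i * log (a i / b i) := by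
  rcases s.eq_empty_or_nonempty with rfl | hs
  · simp
  have hg : ∀ i ∈ s, 0 < 2 * (a i + b i) := fun i hi => by linarith [ha i hi, hb i hi]
  have htot : ∑ i ∈ s, 2 * (a i + b i) = 4 * ∑ i ∈ s, a i := by
    rw [← mul_sum, sum_add_distrib, hab]; ring
  have htitu := sq_sum_div_le_sum_sq_div s (fun i => |a i - b i|) hg
  simp only [sq_abs, htot] at htitu
  have hpoint : ∑ i ∈ s, (a i - b i) ^ 2 / (2 * (a i + b i)) ≤ ∑ i ∈ s, a i * log (a i / b i) := by
    calc _ ≤ ∑ i ∈ s, (a i * log (a i / b i) - a i + b i) :=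
          sum_le_sum fun i hi => sq_sub_div_le_mul_log_div_sub_add (ha i hi) (hb i hi)
      _ = _ := by rw [sum_add_distrib, sum_sub_distrib, hab, sub_add_cancel]
  have hA := sum_pos ha hs
  rw [div_le_iff₀ (by linarith)] at htitu
  linarith [mul_le_mul_of_nonneg_right hpoint (by linarith : (0:ℝ) ≤ 4 * ∑ i ∈ s, a i)]

theorem sq_half_sum_abs_sub_le_log_two_mul_sum_mul_logb {ι : Type*} (s : Finset ι)
    {a b : ι → ℝ} (ha : ∀ i ∈ s, 0 < a i) (hb : ∀ i ∈ s, 0 < b i) (ha_sum : ∑ i ∈ s, a i = 1)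
    (hb_sum : ∑ i ∈ s, b i = 1) :
    (1 / 2 * ∑ i ∈ s, |a i - b i|) ^ 2 ≤ log 2 * ∑ i ∈ s, a i * logb 2 (a i / b i) := by
  have h := sq_sum_abs_sub_le_mul_sum_mul_log_div s ha hb (ha_sum.trans hb_sum.symm)
  rw [ha_sum, mul_one] at h
  simp only [logb, mul_div_assoc', ← sum_div, mul_div_cancel₀ _ (log_pos one_lt_two).ne']
  rw [mul_pow]
  linarith

theorem sum_pos_of_forall_pos {ι : Type*} [Fintype ι] [Nonempty ι] {f : ι → ℝ}
    (hf : ∀ i, 0 < f i) : 0 < ∑ i, f i :=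
  sum_pos (fun i _ => hf i) univ_nonempty

theorem sum_comm_cycle₄ {α β γ δ M : Type*} [AddCommMonoid M] {s : Finset α} {t : Finset β}
    {u : Finset γ} {v : Finset δ} {f : α → β → γ → δ → M} :
    ∑ a ∈ s, ∑ b ∈ t, ∑ c ∈ u, ∑ d ∈ v, f a b c d =
      ∑ b ∈ t, ∑ c ∈ u, ∑ d ∈ v, ∑ a ∈ s, f a b c d := by
  rw [sum_comm]
  exact sum_congr rfl fun _ _ => sum_comm_cycle.symm

theorem log_div_add_log_mul_div {m p u v w r : ℝ} (hm : 0 < m) (hp : 0 < p) (hu : 0 < u)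
    (hv : 0 < v) (hw : 0 < w) (hr : 0 < r) :
    log (m / (u * v * w)) + log (p * v / (r * m)) = log (p / (u * r * w)) := by
  rw [← log_mul (by positivity) (by positivity)]
  congr 1
  field_simp

section JointDistribution

variable {α β γ δ ε : Type*} [Fintype α] [Fintype β] [Fintype γ] [Fintype δ] [Fintype ε]
  {P : α → β → γ → δ → ε → ℝ}

/-- With `u = P_X`, `v = P_Y`, `r = P_{YX̃Ỹ}`, this reads
`D(P_{XYZ} ‖ P_X P_Y W) + I(X̃Ỹ; XZ | Y) = D(P ‖ P_X P_{YX̃Ỹ} W)` (in nats). -/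
theorem klDiv_marginal_add_condMutualInfo_eq [Nonempty γ] [Nonempty δ] {W : α → β → ε → ℝ}
    {u : α → ℝ} {v : β → ℝ} {r : β → γ → δ → ℝ} (hP : ∀ x y c d z, 0 < P x y c d z)
    (hW : ∀ x y z, 0 < W x y z) (hu : ∀ x, 0 < u x) (hv : ∀ y, 0 < v y)
    (hr : ∀ y c d, 0 < r y c d) :
    ∑ x, ∑ y, ∑ z, (∑ c, ∑ d, P x y c d z) *
        log ((∑ c, ∑ d, P x y c d z) / (u x * v y * W x y z)) +
      ∑ x, ∑ y, ∑ c, ∑ d, ∑ z, P x y c d z *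
        log (P x y c d z * v y / (r y c d * ∑ c', ∑ d', P x y c' d' z)) =
    ∑ x, ∑ y, ∑ c, ∑ d, ∑ z, P x y c d z * log (P x y c d z / (u x * r y c d * W x y z)) := by
  rw [← sum_add_distrib]
  refine sum_congr rfl fun x _ => ?_
  rw [← sum_add_distrib]
  refine sum_congr rfl fun y _ => ?_
  simp only [sum_mul]
  rw [← sum_comm_cycle, ← sum_add_distrib]
  refine sum_congr rfl fun c _ => ?_
  rw [← sum_add_distrib]
  refine sum_congr rfl fun d _ => ?_
  rw [← sum_add_distrib]
  refine sum_congr rfl fun z _ => ?_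
  rw [← mul_add, log_div_add_log_mul_div
    (sum_pos_of_forall_pos fun c => sum_pos_of_forall_pos fun d => hP x y c d z)
    (hP x y c d z) (hu x) (hv y) (hW x y z) (hr y c d)]

theorem klDiv_marginal_le {Q : α → β → γ → δ → ε → ℝ} (hP : ∀ x y c d z, 0 < P x y c d z)
    (hQ : ∀ x y c d z, 0 < Q x y c d z) :
    ∑ x, ∑ c, ∑ d, ∑ z, (∑ y, P x y c d z) * log ((∑ y, P x y c d z) / ∑ y, Q x y c d z) ≤
      ∑ x, ∑ y, ∑ c, ∑ d, ∑ z, P x y c d z * log (P x y c d z / Q x y c d z) := by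
  gcongr with x _
  rw [sum_comm_cycle₄]
  gcongr with c _ d _ z _
  exact sum_mul_log_sum_div_sum_le _ (fun y _ => hP x y c d z) (fun y _ => hQ x y c d z)

end JointDistribution

/-- if `D(P_{XYZ} ‖ P_X P_Y W) + I(X̃Ỹ; XZ | Y) < 2η`, then
`D(P_{XX̃ỸZ} ‖ P_X P_{X̃Ỹ} V) < 2η` with `V(z|x,xt,yt) = ∑_y P_{Y|X̃Ỹ}(y|xt,yt) W(z|x,y)`,
and by Pinsker the total variation distance is less than `√(2 ln 2 · 2η) = 2√(ln 2 · η)`. -/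
theorem spoof_divergence_bound
    {X Y Z : Type} [Fintype X] [Fintype Y] [Fintype Z]
    (P : X → Y → X → Y → Z → ℝ)  -- joint of (X, Y, X̃, Ỹ, Z)
    (W : X → Y → Z → ℝ)
    (hPpos : ∀ x y xt yt z, 0 < P x y xt yt z)
    (hPsum : ∑ x, ∑ y, ∑ xt, ∑ yt, ∑ z, P x y xt yt z = 1)
    (hWpos : ∀ x y z, 0 < W x y z) (hWsum : ∀ x y, ∑ z, W x y z = 1)
    (η : ℝ) :
    let PXYZ : X → Y → Z → ℝ := fun x y z => ∑ xt, ∑ yt, P x y xt yt z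
    let PX : X → ℝ := fun x => ∑ y, ∑ xt, ∑ yt, ∑ z, P x y xt yt z
    let PY : Y → ℝ := fun y => ∑ x, ∑ xt, ∑ yt, ∑ z, P x y xt yt z
    let PXtYt : X → Y → ℝ := fun xt yt => ∑ x, ∑ y, ∑ z, P x y xt yt z
    let PYXtYt : Y → X → Y → ℝ := fun y xt yt => ∑ x, ∑ z, P x y xt yt z
    let PYXZ : Y → X → Z → ℝ := fun y x z => ∑ xt, ∑ yt, P x y xt yt z
    let PXXtYtZ : X → X → Y → Z → ℝ := fun x xt yt z => ∑ y, P x y xt yt z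
    let V : X → X → Y → Z → ℝ := fun x xt yt z =>
      ∑ y, (PYXtYt y xt yt / PXtYt xt yt) * W x y z
    let D0 : ℝ := ∑ x, ∑ y, ∑ z,
      PXYZ x y z * Real.logb 2 (PXYZ x y z / (PX x * PY y * W x y z))
    let Icond : ℝ := ∑ x, ∑ y, ∑ xt, ∑ yt, ∑ z,
      P x y xt yt z *
        Real.logb 2 ((P x y xt yt z * PY y) / (PYXtYt y xt yt * PYXZ y x z))
    let D2 : ℝ := ∑ x, ∑ xt, ∑ yt, ∑ z,
      PXXtYtZ x xt yt z *
        Real.logb 2 (PXXtYtZ x xt yt z / (PX x * PXtYt xt yt * V x xt yt z))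
    let dTV : ℝ := (1/2) * ∑ x, ∑ xt, ∑ yt, ∑ z,
      |PXXtYtZ x xt yt z - PX x * PXtYt xt yt * V x xt yt z|
    D0 + Icond < 2 * η →
      D2 < 2 * η ∧
      dTV < Real.sqrt (2 * Real.log 2 * (2 * η)) ∧
      dTV < 2 * Real.sqrt (Real.log 2 * η) := by
  intro PXYZ PX PY PXtYt PYXtYt PYXZ PXXtYtZ V D0 Icond D2 dTV hlt
  have : Nonempty X := by contrapose! hPsum; simp
  have : Nonempty Y := by contrapose! hPsum; simp
  have : Nonempty Z := by contrapose! hPsum; simp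
  have hPX : ∀ x, 0 < PX x := fun x => sum_pos_of_forall_pos fun y => sum_pos_of_forall_pos
    fun xt => sum_pos_of_forall_pos fun yt => sum_pos_of_forall_pos fun z => hPpos x y xt yt z
  have hPY : ∀ y, 0 < PY y := fun y => sum_pos_of_forall_pos fun x => sum_pos_of_forall_pos
    fun xt => sum_pos_of_forall_pos fun yt => sum_pos_of_forall_pos fun z => hPpos x y xt yt z
  have hPYXtYt : ∀ y xt yt, 0 < PYXtYt y xt yt := fun y xt yt => sum_pos_of_forall_pos
    fun x => sum_pos_of_forall_pos fun z => hPpos x y xt yt z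
  have hPXtYt : ∀ xt yt, 0 < PXtYt xt yt := fun xt yt => sum_pos_of_forall_pos
    fun x => sum_pos_of_forall_pos fun y => sum_pos_of_forall_pos fun z => hPpos x y xt yt z
  have hPXXtYtZ : ∀ x xt yt z, 0 < PXXtYtZ x xt yt z := fun x xt yt z =>
    sum_pos_of_forall_pos fun y => hPpos x y xt yt z
  have hPXPYXtYtW : ∀ x y xt yt z, 0 < PX x * PYXtYt y xt yt * W x y z := fun x y xt yt z =>
    mul_pos (mul_pos (hPX x) (hPYXtYt y xt yt)) (hWpos x y z)
  have hmarginal_y : ∀ x xt yt z,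
      ∑ y, PX x * PYXtYt y xt yt * W x y z = PX x * PXtYt xt yt * V x xt yt z := by
    intro x xt yt z
    simp only [V, mul_sum]
    refine sum_congr rfl fun y _ => ?_
    field_simp [(hPXtYt xt yt).ne']
  have hPXPXtYtV : ∀ x xt yt z, 0 < PX x * PXtYt xt yt * V x xt yt z := fun x xt yt z =>
    hmarginal_y x xt yt z ▸ sum_pos_of_forall_pos fun y => hPXPYXtYtW x y xt yt z
  have hlog2 : 0 < log 2 := log_pos one_lt_two
  have hD2 : log 2 * D2 ≤ log 2 * (D0 + Icond) := by
    simp only [D2, D0, Icond, PXYZ, PYXZ, PXXtYtZ, logb, mul_div_assoc', ← sum_div, ← add_div,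
      mul_div_cancel₀ _ hlog2.ne']
    rw [klDiv_marginal_add_condMutualInfo_eq hPpos hWpos hPX hPY hPYXtYt]
    simp only [← hmarginal_y]
    exact klDiv_marginal_le hPpos hPXPYXtYtW
  have hPXXtYtZ_sum : ∑ x, ∑ xt, ∑ yt, ∑ z, PXXtYtZ x xt yt z = 1 := by
    rw [← hPsum]
    exact sum_congr rfl fun x _ => sum_comm_cycle₄.symm
  have hPXtYt_sum : ∑ xt, ∑ yt, PXtYt xt yt = 1 := by
    rw [← hPsum]
    simp only [PXtYt]
    rw [sum_comm_cycle₄, sum_comm_cycle₄]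
  have hV_sum : ∀ x xt yt, ∑ z, V x xt yt z = 1 := fun x xt yt => by
    simp only [V]
    rw [sum_comm]
    simp only [← mul_sum, hWsum, mul_one, ← sum_div]
    rw [sum_comm, div_self (hPXtYt xt yt).ne']
  have hPXPXtYtV_sum : ∑ x, ∑ xt, ∑ yt, ∑ z, PX x * PXtYt xt yt * V x xt yt z = 1 := by
    simp only [← mul_sum, hV_sum, mul_one, hPXtYt_sum]
    exact hPsum
  have hTV : dTV ^ 2 ≤ log 2 * D2 := by
    have h := sq_half_sum_abs_sub_le_log_two_mul_sum_mul_logb (univ : Finset (X × X × Y × Z))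
      (a := fun p => PXXtYtZ p.1 p.2.1 p.2.2.1 p.2.2.2)
      (b := fun p => PX p.1 * PXtYt p.2.1 p.2.2.1 * V p.1 p.2.1 p.2.2.1 p.2.2.2)
      (fun p _ => hPXXtYtZ _ _ _ _) (fun p _ => hPXPXtYtV _ _ _ _)
      (by simpa only [Fintype.sum_prod_type] using hPXXtYtZ_sum)
      (by simpa only [Fintype.sum_prod_type] using hPXPXtYtV_sum)
    simp only [Fintype.sum_prod_type] at h
    exact h
  have hD2_lt : D2 < 2 * η :=
    lt_of_mul_lt_mul_left (hD2.trans_lt (mul_lt_mul_of_pos_left hlt hlog2)) hlog2.le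
  have hTV_sqrt : dTV < √(2 * log 2 * (2 * η)) := by
    rw [lt_sqrt (by simp only [dTV]; positivity)]
    linarith [sq_nonneg dTV, mul_lt_mul_of_pos_left hD2_lt hlog2]
  have hsqrt : √(2 * log 2 * (2 * η)) = 2 * √(log 2 * η) := by
    rw [show 2 * log 2 * (2 * η) = 2 ^ 2 * (log 2 * η) by ring, sqrt_mul (by positivity),
      sqrt_sq zero_le_two]
  exact ⟨hD2_lt, hTV_sqrt, hsqrt ▸ hTV_sqrt⟩
end

section
/- Let P be a joint distribution of (X, Y, X̃, Y', X', Ỹ, Z) on finite alphabets and W a MAC kernel. If D(P_{X'ỸZ} ‖ P_{X'} P_{Ỹ} W) ≤ η and I(X X̃ ; Ỹ Z | X') < η, then I(Ỹ ; X X̃) ≤ 2η; in particular I(Ỹ; X) ≤ 2η and I(Ỹ; X̃) ≤ 2η. -/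
/-!
Let `Q = P_{XX̃X'ỸZ}` and `R = P_Ỹ P_{XX̃} P_{X'|XX̃} W = P_Ỹ P_{X'XX̃} W`. Pointwise
`Q / R = P_{X'ỸZ} / (P_{X'} P_Ỹ W) · Q P_{X'} / (P_{X'XX̃} P_{X'ỸZ})`, so `D(Q ‖ R)` is exactly
`D + I(XX̃; ỸZ | X')`. Since `∑_z W = 1`, the `(Ỹ, X, X̃)`-marginal of `R` is `P_Ỹ P_{XX̃}`, and the
log-sum inequality (divergence does not increase under marginalisation) gives
`I(Ỹ; XX̃) ≤ D(Q ‖ R) < 2η`. Marginalising `X̃` (resp. `X`) in the same way shows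
`I(Ỹ; X), I(Ỹ; X̃) ≤ I(Ỹ; XX̃)`.
-/

open Finset Real

theorem sum_univ_pos {ι : Type*} [Fintype ι] [Nonempty ι] {f : ι → ℝ} (h : ∀ i, 0 < f i) :
    0 < ∑ i, f i :=
  sum_pos (fun i _ => h i) univ_nonempty

theorem Real.sum_mul_logb_sum_div_sum_le {ι : Type*} [Fintype ι] {b : ℝ} (hb : 1 < b)
    {p q : ι → ℝ} (hp : ∀ i, 0 < p i) (hq : ∀ i, 0 < q i) :
    (∑ i, p i) * logb b ((∑ i, p i) / ∑ i, q i) ≤ ∑ i, p i * logb b (p i / q i) := by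
  rcases isEmpty_or_nonempty ι with hι | hι
  · simp
  have hS : 0 < ∑ i, q i := sum_univ_pos hq
  have hr : 0 < (∑ i, p i) / ∑ i, q i := div_pos (sum_univ_pos hp) hS
  generalize hr_def : (∑ i, p i) / ∑ i, q i = r at hr ⊢
  have key (i : ι) : p i - q i * r ≤ p i * log (p i / q i) - p i * log r := by
    have h := one_sub_inv_le_log_of_pos (div_pos (hp i) (mul_pos (hq i) hr))
    rw [← mul_sub, ← log_div (div_pos (hp i) (hq i)).ne' hr.ne', div_div]
    calc p i - q i * r = p i * (1 - (p i / (q i * r))⁻¹) := by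
          field_simp [(hp i).ne']
      _ ≤ _ := mul_le_mul_of_nonneg_left h (hp i).le
  have hsum : ∑ i, (p i - q i * r) = 0 := by
    rw [sum_sub_distrib, ← sum_mul, ← hr_def, mul_div_cancel₀ _ hS.ne', sub_self]
  have := sum_le_sum fun i (_ : i ∈ univ) => key i
  rw [hsum, sum_sub_distrib, ← sum_mul] at this
  simp only [logb, mul_div_assoc', ← sum_div]
  exact div_le_div_of_nonneg_right (by linarith) (log_pos hb).le

theorem sum_sum_mul_logb_marginal_le {A B C : Type*} [Fintype A] [Fintype B] [Fintype C]
    {b : ℝ} (hb : 1 < b) (p : A → B → C → ℝ) (s : A → ℝ) (r : B → C → ℝ)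
    (hp : ∀ a b c, 0 < p a b c) (hs : ∀ a, 0 < s a) (hr : ∀ b c, 0 < r b c) :
    ∑ a, ∑ b', (∑ c, p a b' c) * logb b ((∑ c, p a b' c) / (s a * ∑ c, r b' c)) ≤
      ∑ a, ∑ b', ∑ c, p a b' c * logb b (p a b' c / (s a * r b' c)) :=
  sum_le_sum fun a _ => sum_le_sum fun b' _ => by
    rw [mul_sum]
    exact sum_mul_logb_sum_div_sum_le hb (hp a b') fun c => mul_pos (hs a) (hr b' c)

theorem mutualInfo_le_divergence_add_condMutualInfo
    {X Xt Xp Yt Z : Type*} [Fintype X] [Fintype Xt] [Fintype Xp] [Fintype Yt] [Fintype Z]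
    [Nonempty X] [Nonempty Xt] [Nonempty Xp] [Nonempty Yt] [Nonempty Z]
    (Q : X → Xt → Xp → Yt → Z → ℝ) (W : Xp → Yt → Z → ℝ)
    (hQ : ∀ x xt x' yt z, 0 < Q x xt x' yt z) (hW : ∀ x' yt z, 0 < W x' yt z)
    (hWsum : ∀ x' yt, ∑ z, W x' yt z = 1) :
    let PXpYtZ := fun x' yt z => ∑ x, ∑ xt, Q x xt x' yt z
    let PXp := fun x' => ∑ yt, ∑ z, PXpYtZ x' yt z
    let PYt := fun yt => ∑ x', ∑ z, PXpYtZ x' yt z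
    let PXpXXt := fun x' x xt => ∑ yt, ∑ z, Q x xt x' yt z
    let PXXt := fun x xt => ∑ x', ∑ yt, ∑ z, Q x xt x' yt z
    let PYtXXt := fun yt x xt => ∑ x', ∑ z, Q x xt x' yt z
    ∑ yt, ∑ x, ∑ xt, PYtXXt yt x xt * logb 2 (PYtXXt yt x xt / (PYt yt * PXXt x xt)) ≤
      ∑ x', ∑ yt, ∑ z,
          PXpYtZ x' yt z * logb 2 (PXpYtZ x' yt z / (PXp x' * PYt yt * W x' yt z)) +
        ∑ x, ∑ xt, ∑ x', ∑ yt, ∑ z, Q x xt x' yt z *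
          logb 2 (Q x xt x' yt z * PXp x' / (PXpXXt x' x xt * PXpYtZ x' yt z)) := by
  intro PXpYtZ PXp PYt PXpXXt PXXt PYtXXt
  have hPXpYtZ x' yt z : 0 < PXpYtZ x' yt z :=
    sum_univ_pos fun x => sum_univ_pos fun xt => hQ x xt x' yt z
  have hPXp x' : 0 < PXp x' := sum_univ_pos fun yt => sum_univ_pos fun z => hPXpYtZ x' yt z
  have hPYt yt : 0 < PYt yt := sum_univ_pos fun x' => sum_univ_pos fun z => hPXpYtZ x' yt z
  have hPXpXXt x' x xt : 0 < PXpXXt x' x xt :=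
    sum_univ_pos fun yt => sum_univ_pos fun z => hQ x xt x' yt z
  have hmarginal : ∀ yt x xt, PYtXXt yt x xt * logb 2 (PYtXXt yt x xt / (PYt yt * PXXt x xt)) ≤
      ∑ x', ∑ z, Q x xt x' yt z *
        logb 2 (Q x xt x' yt z / (PYt yt * PXpXXt x' x xt * W x' yt z)) := by
    intro yt x xt
    have h := sum_mul_logb_sum_div_sum_le one_lt_two (fun c : Xp × Z => hQ x xt c.1 yt c.2)
      fun c => mul_pos (mul_pos (hPYt yt) (hPXpXXt c.1 x xt)) (hW c.1 yt c.2)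
    simpa only [Fintype.sum_prod_type, ← mul_sum, hWsum, mul_one] using h
  have hchain : ∀ x xt x' yt z, Q x xt x' yt z *
        logb 2 (Q x xt x' yt z / (PYt yt * PXpXXt x' x xt * W x' yt z)) =
      Q x xt x' yt z * logb 2 (PXpYtZ x' yt z / (PXp x' * PYt yt * W x' yt z)) +
        Q x xt x' yt z * logb 2 (Q x xt x' yt z * PXp x' / (PXpXXt x' x xt * PXpYtZ x' yt z)) := by
    intro x xt x' yt z
    have := hQ x xt x' yt z; have := hW x' yt z; have := hPXpYtZ x' yt z
    have := hPXp x'; have := hPYt yt; have := hPXpXXt x' x xt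
    rw [← mul_add, ← logb_mul (by positivity) (by positivity)]
    congr 2
    field_simp
  calc _ ≤ ∑ yt, ∑ x, ∑ xt, ∑ x', ∑ z, Q x xt x' yt z *
          logb 2 (Q x xt x' yt z / (PYt yt * PXpXXt x' x xt * W x' yt z)) :=
        sum_le_sum fun yt _ => sum_le_sum fun x _ => sum_le_sum fun xt _ => hmarginal yt x xt
    _ = ∑ x, ∑ xt, ∑ x', ∑ yt, ∑ z, Q x xt x' yt z *
          logb 2 (Q x xt x' yt z / (PYt yt * PXpXXt x' x xt * W x' yt z)) := by
        simp only [sum_comm (α := Xp)]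
        simp only [sum_comm (α := Xt)]
        simp only [sum_comm (α := X)]
    _ = _ := by
        simp only [hchain, sum_add_distrib]
        congr 1
        simp only [PXpYtZ, sum_mul]
        simp only [sum_comm (α := Z)]
        simp only [sum_comm (α := Yt)]
        simp only [sum_comm (α := Xp)]

/-- Lemma "indep": if `D(P_{X'ỸZ} ‖ P_{X'} P_{Ỹ} W) ≤ η` and
`I(XX̃; ỸZ | X') < η`, then `I(Ỹ; XX̃) ≤ 2η`, and in particular
`I(Ỹ; X) ≤ 2η` and `I(Ỹ; X̃) ≤ 2η`. -/
theorem indep_lemma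
    {X Y Z : Type} [Fintype X] [Fintype Y] [Fintype Z]
    (P : X → Y → X → Y → X → Y → Z → ℝ)  -- joint of (X, Y, X̃, Y', X', Ỹ, Z)
    (W : X → Y → Z → ℝ)
    (hPpos : ∀ x y xt y' x' yt z, 0 < P x y xt y' x' yt z)
    (hPsum : ∑ x, ∑ y, ∑ xt, ∑ y', ∑ x', ∑ yt, ∑ z, P x y xt y' x' yt z = 1)
    (hWpos : ∀ x y z, 0 < W x y z) (hWsum : ∀ x y, ∑ z, W x y z = 1)
    (η : ℝ) :
    let Q : X → X → X → Y → Z → ℝ := fun x xt x' yt z =>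
      ∑ y, ∑ y', P x y xt y' x' yt z   -- marginal of (X, X̃, X', Ỹ, Z)
    let PXpYtZ : X → Y → Z → ℝ := fun x' yt z => ∑ x, ∑ xt, Q x xt x' yt z
    let PXp : X → ℝ := fun x' => ∑ yt, ∑ z, PXpYtZ x' yt z
    let PYt : Y → ℝ := fun yt => ∑ x', ∑ z, PXpYtZ x' yt z
    let PXpXXt : X → X → X → ℝ := fun x' x xt => ∑ yt, ∑ z, Q x xt x' yt z
    let PXXt : X → X → ℝ := fun x xt => ∑ x', ∑ yt, ∑ z, Q x xt x' yt z
    let PYtXXt : Y → X → X → ℝ := fun yt x xt => ∑ x', ∑ z, Q x xt x' yt z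
    let PXonly : X → ℝ := fun x => ∑ xt, PXXt x xt
    let PXtonly : X → ℝ := fun xt => ∑ x, PXXt x xt
    let PYtX : Y → X → ℝ := fun yt x => ∑ xt, PYtXXt yt x xt
    let PYtXt : Y → X → ℝ := fun yt xt => ∑ x, PYtXXt yt x xt
    let D : ℝ := ∑ x', ∑ yt, ∑ z,
      PXpYtZ x' yt z * Real.logb 2 (PXpYtZ x' yt z / (PXp x' * PYt yt * W x' yt z))
    let Icond : ℝ := ∑ x, ∑ xt, ∑ x', ∑ yt, ∑ z,
      Q x xt x' yt z *
        Real.logb 2 ((Q x xt x' yt z * PXp x') / (PXpXXt x' x xt * PXpYtZ x' yt z))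
    let IYtXXt : ℝ := ∑ yt, ∑ x, ∑ xt,
      PYtXXt yt x xt * Real.logb 2 (PYtXXt yt x xt / (PYt yt * PXXt x xt))
    let IYtX : ℝ := ∑ yt, ∑ x,
      PYtX yt x * Real.logb 2 (PYtX yt x / (PYt yt * PXonly x))
    let IYtXt : ℝ := ∑ yt, ∑ xt,
      PYtXt yt xt * Real.logb 2 (PYtXt yt xt / (PYt yt * PXtonly xt))
    D ≤ η → Icond < η →
      IYtXXt ≤ 2 * η ∧ IYtX ≤ 2 * η ∧ IYtXt ≤ 2 * η := by
  intro Q PXpYtZ PXp PYt PXpXXt PXXt PYtXXt PXonly PXtonly PYtX PYtXt D Icond IYtXXt IYtX IYtXt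
    hD hI
  have : Nonempty X := by by_contra h; rw [not_nonempty_iff] at h; simp at hPsum
  have : Nonempty Y := by by_contra h; rw [not_nonempty_iff] at h; simp at hPsum
  have : Nonempty Z := by by_contra h; rw [not_nonempty_iff] at h; simp at hPsum
  have hQ x xt x' yt z : 0 < Q x xt x' yt z :=
    sum_univ_pos fun y => sum_univ_pos fun y' => hPpos x y xt y' x' yt z
  have hPYtXXt yt x xt : 0 < PYtXXt yt x xt :=
    sum_univ_pos fun x' => sum_univ_pos fun z => hQ x xt x' yt z
  have hPYt yt : 0 < PYt yt :=
    sum_univ_pos fun x' => sum_univ_pos fun z => sum_univ_pos fun x => sum_univ_pos fun xt =>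
      hQ x xt x' yt z
  have hPXXt x xt : 0 < PXXt x xt :=
    sum_univ_pos fun x' => sum_univ_pos fun yt => sum_univ_pos fun z => hQ x xt x' yt z
  have hXXt : IYtXXt ≤ D + Icond :=
    mutualInfo_le_divergence_add_condMutualInfo Q W hQ hWpos hWsum
  have hX : IYtX ≤ IYtXXt :=
    sum_sum_mul_logb_marginal_le one_lt_two PYtXXt PYt PXXt hPYtXXt hPYt hPXXt
  have hXt : IYtXt ≤ IYtXXt :=
    (sum_sum_mul_logb_marginal_le one_lt_two (fun yt xt x => PYtXXt yt x xt) PYt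
      (fun xt x => PXXt x xt) (fun yt xt x => hPYtXXt yt x xt) hPYt fun xt x => hPXXt x xt).trans_eq
      (sum_congr rfl fun _ _ => sum_comm)
  exact ⟨by linarith, by linarith, by linarith⟩
end
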